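/- arXiv:2604.26782 — 3 statements merged into one kernel-verified Lean document; each statement's English description precedes it below -/
import Mathlib

section
/- Suppose a: [0,T] → ℝ, b, m, z*: [0,T] → ℝ^d, γ: [0,T] → ℝ are differentiable and satisfy: a'(t) = c₂⁻¹a(t)² + 2c₀a(t) - c₃ - c₄; m'(t) = -c₂⁻¹b(t) + c₁(z*(t) - m(t)); b'(t) = c₀b(t) - c₄(m(t) - z*(t)); γ'(t) = -(1/2)[c₂⁻¹|b(t)|² + c_σ²·d·a(t) + c₄|m(t) - z*(t)|²]; with terminal conditions a(T) = c₅, b(T) = c₅(m(T) - z*(T)), γ(T) = (c₅/2)|z*(T) - m(T)|². Define v(t,z) = (1/2)a(t)|z - m(t)|² + b(t)·(z - m(t)) + γ(t) + 1/2. Then v satisfies the nonlinear PDE ∂ₜv + (c₀(m(t) - z) + c₁(z*(t) - m(t)))·∂_z v - (1/(2c₂))|∂_z v|² + (c_σ²/2)Δ_z v + (c₃/2)|z - m(t)|² + (c₄/2)|z - z*(t)|² = 0 for all (t,z) ∈ [0,T) × ℝ^d, and v(T,z) = (c₅/2)|z - z*(T)|² + 1/2. -/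
open InnerProductSpace

lemma quad_fderiv {d : ℕ} (A : ℝ) (M B : EuclideanSpace ℝ (Fin d)) (C : ℝ)
    (z : EuclideanSpace ℝ (Fin d)) :
    HasFDerivAt (fun y : EuclideanSpace ℝ (Fin d) =>
        1/2 * A * ‖y - M‖^2 + (inner ℝ B (y - M) : ℝ) + C)
      ((toDual ℝ (EuclideanSpace ℝ (Fin d))) (A • (z - M) + B)) z := by
  have h0 : HasFDerivAt (fun y : EuclideanSpace ℝ (Fin d) => y - M)
      (ContinuousLinearMap.id ℝ _) z := (hasFDerivAt_id z).sub_const M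
  have h1 : HasFDerivAt (fun y : EuclideanSpace ℝ (Fin d) =>
      (inner ℝ (y - M) (y - M) : ℝ)) _ z := h0.inner ℝ h0
  have h2 : HasFDerivAt (fun y : EuclideanSpace ℝ (Fin d) =>
      (inner ℝ B (y - M) : ℝ)) ((innerSL ℝ B).comp (ContinuousLinearMap.id ℝ _)) z :=
    (innerSL ℝ B).hasFDerivAt.comp z h0
  have h3 := ((h1.const_mul (1/2 * A)).add h2).add_const C
  have h4 : (fun y : EuclideanSpace ℝ (Fin d) => 1/2 * A * ‖y - M‖^2 + (inner ℝ B (y - M) : ℝ) + C)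
      = fun x => ((fun y => 1 / 2 * A * (inner ℝ (y - M) (y - M) : ℝ)) + fun y => (inner ℝ B (y - M) : ℝ)) x + C := by
    funext y; simp only [Pi.add_apply, real_inner_self_eq_norm_sq]
  rw [h4]
  refine h3.congr_fderiv ?_
  · ext w
    simp only [fderivInnerCLM_apply, ContinuousLinearMap.comp_apply,
      ContinuousLinearMap.add_apply, ContinuousLinearMap.smul_apply,
      ContinuousLinearMap.prod_apply, ContinuousLinearMap.id_apply, toDual_apply_apply,
      inner_add_left, real_inner_smul_left, smul_eq_mul, innerSL_apply_apply]
    rw [real_inner_comm w (z - M)]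
    ring


/-- The quadratic ansatz built from the ODE system
\eqref{eq_final_ode_a}--\eqref{eq_final_ode_g} solves the reduced HJB equation of the
linear-quadratic mean-field game and its terminal condition. -/
theorem stmt4 (d : ℕ) (T c₀ c₁ c₂ c₃ c₄ c₅ cσ : ℝ) (hc₂ : 0 < c₂)
    (a γ : ℝ → ℝ) (b m zs : ℝ → EuclideanSpace ℝ (Fin d))
    (ha : ∀ t, HasDerivAt a (c₂⁻¹ * (a t)^2 + 2*c₀*a t - c₃ - c₄) t)
    (hm : ∀ t, HasDerivAt m (-c₂⁻¹ • b t + c₁ • (zs t - m t)) t)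
    (hb : ∀ t, HasDerivAt b (c₀ • b t - c₄ • (m t - zs t)) t)
    (hγ : ∀ t, HasDerivAt γ
      (-(1/2) * (c₂⁻¹ * ‖b t‖^2 + cσ^2 * d * a t + c₄ * ‖m t - zs t‖^2)) t)
    (haT : a T = c₅) (hbT : b T = c₅ • (m T - zs T))
    (hγT : γ T = c₅/2 * ‖zs T - m T‖^2)
    (v : ℝ → EuclideanSpace ℝ (Fin d) → ℝ)
    (hv : ∀ t z, v t z = 1/2 * a t * ‖z - m t‖^2 + (inner ℝ (b t) (z - m t) : ℝ) + γ t + 1/2) :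
    (∀ t ∈ Set.Ico (0:ℝ) T, ∀ z : EuclideanSpace ℝ (Fin d),
      deriv (fun s => v s z) t
        + (inner ℝ (c₀ • (m t - z) + c₁ • (zs t - m t)) (gradient (v t) z) : ℝ)
        - 1/(2*c₂) * ‖gradient (v t) z‖^2
        + cσ^2/2 * (∑ i : Fin d,
            fderiv ℝ (fun y => fderiv ℝ (v t) y (EuclideanSpace.single i 1)) z
              (EuclideanSpace.single i 1))
        + c₃/2 * ‖z - m t‖^2 + c₄/2 * ‖z - zs t‖^2 = 0) ∧
    ∀ z : EuclideanSpace ℝ (Fin d), v T z = c₅/2 * ‖z - zs T‖^2 + 1/2 := by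
  -- spatial fderiv of v t
  have hvfun : ∀ t, v t = fun y : EuclideanSpace ℝ (Fin d) =>
      1/2 * a t * ‖y - m t‖^2 + (inner ℝ (b t) (y - m t) : ℝ) + (γ t + 1/2) := by
    intro t; funext y; rw [hv]; ring
  have hvf : ∀ t (y : EuclideanSpace ℝ (Fin d)), HasFDerivAt (v t)
      ((toDual ℝ (EuclideanSpace ℝ (Fin d))) (a t • (y - m t) + b t)) y := by
    intro t y; rw [hvfun t]; exact quad_fderiv _ _ _ _ y
  have hgrad : ∀ t (z : EuclideanSpace ℝ (Fin d)), gradient (v t) z = a t • (z - m t) + b t := by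
    intro t z
    exact (hasGradientAt_iff_hasFDerivAt.mpr (hvf t z)).gradient
  constructor
  · intro t ht z
    -- second derivatives
    have hsum : ∀ i : Fin d,
        fderiv ℝ (fun y => fderiv ℝ (v t) y (EuclideanSpace.single i 1)) z
          (EuclideanSpace.single i 1) = a t := by
      intro i
      set e : EuclideanSpace ℝ (Fin d) := EuclideanSpace.single i (1:ℝ) with he
      have hfun : (fun y => fderiv ℝ (v t) y e)
          = fun y : EuclideanSpace ℝ (Fin d) => (inner ℝ (a t • (y - m t) + b t) e : ℝ) := by
        funext y; rw [(hvf t y).fderiv]; simp only [toDual_apply_apply]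
      rw [hfun]
      have hf : HasFDerivAt (fun y : EuclideanSpace ℝ (Fin d) => a t • (y - m t) + b t)
          ((a t) • ContinuousLinearMap.id ℝ (EuclideanSpace ℝ (Fin d))) z :=
        (((hasFDerivAt_id z).sub_const (m t)).const_smul (a t)).add_const (b t)
      have hin := hf.inner ℝ (hasFDerivAt_const e z)
      rw [hin.fderiv]
      simp [fderivInnerCLM_apply, real_inner_smul_left, he,
        EuclideanSpace.inner_single_left, EuclideanSpace.single_apply]
    -- time derivative
    have htfun : (fun s => v s z) = fun s =>
        1/2 * a s * (inner ℝ (z - m s) (z - m s) : ℝ) + (inner ℝ (b s) (z - m s) : ℝ)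
          + γ s + 1/2 := by
      funext s; rw [hv, real_inner_self_eq_norm_sq]
    set M' : EuclideanSpace ℝ (Fin d) := -c₂⁻¹ • b t + c₁ • (zs t - m t) with hM'
    set B' : EuclideanSpace ℝ (Fin d) := c₀ • b t - c₄ • (m t - zs t) with hB'
    have hzm : HasDerivAt (fun s => z - m s) (-M') t := (hm t).const_sub z
    have hQ : HasDerivAt (fun s => (inner ℝ (z - m s) (z - m s) : ℝ))
        ((inner ℝ (z - m t) (-M') : ℝ) + (inner ℝ (-M') (z - m t) : ℝ)) t := hzm.inner ℝ hzm
    have h1 := ((ha t).const_mul (1/2)).mul hQ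
    have h2 : HasDerivAt (fun s => (inner ℝ (b s) (z - m s) : ℝ))
        ((inner ℝ (b t) (-M') : ℝ) + (inner ℝ B' (z - m t) : ℝ)) t := (hb t).inner ℝ hzm
    have hd : HasDerivAt (fun s => 1/2 * a s * (inner ℝ (z - m s) (z - m s) : ℝ)
        + (inner ℝ (b s) (z - m s) : ℝ) + γ s + 1/2) _ t :=
      ((h1.add h2).add (hγ t)).add_const (1/2)
    rw [htfun, hd.deriv, hgrad t z]
    rw [Finset.sum_congr rfl (fun i _ => hsum i), Finset.sum_const, Finset.card_univ,
      Fintype.card_fin, nsmul_eq_mul]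
    -- algebra
    simp only [hM', hB', ← real_inner_self_eq_norm_sq]
    simp only [inner_add_left, inner_add_right, inner_sub_left, inner_sub_right,
      real_inner_smul_left, real_inner_smul_right, inner_neg_left, inner_neg_right]
    simp only [real_inner_comm (m t) z, real_inner_comm (zs t) z, real_inner_comm (b t) z,
      real_inner_comm (zs t) (m t), real_inner_comm (b t) (m t), real_inner_comm (b t) (zs t)]
    field_simp
    ring
  · intro z
    rw [hv, haT, hbT, hγT]
    have hsz : z - zs T = (z - m T) + (m T - zs T) := by abel
    rw [hsz, norm_add_sq_real, real_inner_smul_left, norm_sub_rev (zs T) (m T)]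
    rw [real_inner_comm (m T - zs T) (z - m T)]
    ring
end

section
/- Let η, γ: [0,T] → ℝ be differentiable and satisfy the Riccati system η'(t) = 2(c₁ + c₃)η(t) + η(t)² - (c₄ - c₃²) and γ'(t) = -(c₂²/2)η(t), with η(T) = c₅ and γ(T) = 0. Define v(t,z) = (1/2)η(t)(z - m(t))² + γ(t), where m: [0,T] → ℝ is differentiable with m'(t) = 0. Then v satisfies ∂ₜv + inf_{u∈ℝ}{ u·∂_z v + (1/2)u² - c₃ u (m(t) - z) } + c₁(m(t) - z)∂_z v + (c₂²/2)∂_{zz}v + (c₄/2)(m(t) - z)² = 0 on [0,T) × ℝ, and the infimum is attained at u*(t,z) = (c₃ + η(t))(m(t) - z). -/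
lemma inf_quad (p q : ℝ) :
    (⨅ u : ℝ, u * p + 1/2 * u^2 - q * u) = -1/2 * (p - q)^2 := by
  apply le_antisymm
  · have := ciInf_le (f := fun u : ℝ => u * p + 1/2 * u^2 - q * u)
      ⟨-1/2 * (p - q)^2, by
        rintro x ⟨u, rfl⟩
        nlinarith [sq_nonneg (u + p - q)]⟩ (q - p)
    calc (⨅ u : ℝ, u * p + 1/2 * u^2 - q * u) ≤ _ := this
      _ = -1/2 * (p - q)^2 := by ring
  · exact le_ciInf fun u => by nlinarith [sq_nonneg (u + p - q)]

/-- The quadratic ansatz `v(t,z) = (1/2)η(t)(z - m(t))² + γ(t)` built from the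
Riccati system of the systemic-risk MFG solves the HJB equation with the Hamiltonian infimum,
and the infimum is attained at `u*(t,z) = (c₃ + η(t))(m(t) - z)`. -/
theorem stmt5 (T c₁ c₂ c₃ c₄ c₅ : ℝ) (η γ m : ℝ → ℝ)
    (hη : ∀ t, HasDerivAt η (2*(c₁+c₃)*η t + (η t)^2 - (c₄ - c₃^2)) t)
    (hγ : ∀ t, HasDerivAt γ (-(c₂^2/2) * η t) t)
    (hηT : η T = c₅) (hγT : γ T = 0)
    (hm : ∀ t, HasDerivAt m 0 t)
    (v : ℝ → ℝ → ℝ)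
    (hv : ∀ t z, v t z = 1/2 * η t * (z - m t)^2 + γ t) :
    ∀ t ∈ Set.Ico (0:ℝ) T, ∀ z : ℝ,
      (deriv (fun s => v s z) t
        + (⨅ u : ℝ, u * deriv (v t) z + 1/2 * u^2 - c₃ * u * (m t - z))
        + c₁ * (m t - z) * deriv (v t) z
        + c₂^2/2 * deriv (deriv (v t)) z
        + c₄/2 * (m t - z)^2 = 0) ∧
      (⨅ u : ℝ, u * deriv (v t) z + 1/2 * u^2 - c₃ * u * (m t - z))
        = ((c₃ + η t) * (m t - z)) * deriv (v t) z
          + 1/2 * ((c₃ + η t) * (m t - z))^2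
          - c₃ * ((c₃ + η t) * (m t - z)) * (m t - z) := by
  have hvfun : ∀ t, v t = fun z => 1/2 * η t * (z - m t)^2 + γ t :=
    fun t => funext (hv t)
  have hdz : ∀ t z, deriv (v t) z = η t * (z - m t) := by
    intro t z
    rw [hvfun]
    have h1 : HasDerivAt (fun z : ℝ => (z - m t)^2) (2 * (z - m t)) z := by
      exact (((hasDerivAt_id z).sub_const (m t)).pow 2).congr_deriv (by norm_num)
    have h2 := (h1.const_mul (1/2 * η t)).add_const (γ t)
    have : HasDerivAt (fun z => 1/2 * η t * (z - m t)^2 + γ t) (η t * (z - m t)) z := by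
      exact h2.congr_deriv (by ring)
    exact this.deriv
  intro t ht z
  have hdzz : deriv (deriv (v t)) z = η t := by
    have : deriv (v t) = fun z => η t * (z - m t) := funext (hdz t)
    rw [this]
    have : HasDerivAt (fun z : ℝ => η t * (z - m t)) (η t) z := by
      simpa using ((hasDerivAt_id z).sub_const (m t)).const_mul (η t)
    exact this.deriv
  have hdt : deriv (fun s => v s z) t
      = 1/2 * (2*(c₁+c₃)*η t + (η t)^2 - (c₄ - c₃^2)) * (z - m t)^2 + (-(c₂^2/2) * η t) := by
    have heq : (fun s => v s z) = fun s => 1/2 * η s * (z - m s)^2 + γ s :=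
      funext fun s => hv s z
    rw [heq]
    have hzm : HasDerivAt (fun s => (z - m s)^2) (2 * (z - m t) * (-0)) t :=
      ((hm t).const_sub z).pow 2 |>.congr_deriv (by ring)
    have hprod : HasDerivAt (fun s => 1/2 * η s * (z - m s)^2)
        (1/2 * (2*(c₁+c₃)*η t + (η t)^2 - (c₄ - c₃^2)) * (z - m t)^2) t := by
      have := (((hη t).const_mul (1/2)).mul hzm)
      exact this.congr_deriv (by ring)
    exact (hprod.add (hγ t)).deriv
  have hinf : (⨅ u : ℝ, u * deriv (v t) z + 1/2 * u^2 - c₃ * u * (m t - z))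
      = -1/2 * (deriv (v t) z - c₃ * (m t - z))^2 := by
    have := inf_quad (deriv (v t) z) (c₃ * (m t - z))
    rw [← this]
    congr 1; funext u; ring
  constructor
  · rw [hdt, hinf, hdzz, hdz]; ring
  · rw [hinf, hdz]; ring
end

section
/- Consider the scalar Riccati ODE a'(t) = c₂⁻¹a(t)² + 2c₀a(t) - c₃ - c₄ on [0,T] with terminal condition a(T) = c₅, where c₂ > 0, c₃ + c₄ ≥ 0, and c₅ ≥ 0. Then the (backward) solution a exists on all of [0,T] and satisfies a(t) ≥ min{c₅, r₋} wherever it exists, where r₋ is the smaller root of c₂⁻¹r² + 2c₀r - c₃ - c₄ = 0; moreover if c₅ ≥ 0 and c₃ + c₄ ≥ 0 then a(t) ≥ 0 for all t ∈ [0,T]. -/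
set_option maxHeartbeats 1000000

lemma riccati_deriv_aux (P M U k T t : ℝ) (h : (1:ℝ) - U * Real.exp (2*k*(t-T)) ≠ 0) :
    HasDerivAt (fun s => (P - M*(U*Real.exp (2*k*(s-T))))/(1 - U*Real.exp (2*k*(s-T))))
      (2*k*(U*Real.exp (2*k*(t-T)))*(P-M)/(1 - U*Real.exp (2*k*(t-T)))^2) t := by
  have hlin : HasDerivAt (fun s : ℝ => 2*k*(s-T)) (2*k) t := by
    simpa using ((hasDerivAt_id t).sub_const T).const_mul (2*k)
  have hexp : HasDerivAt (fun s => U*Real.exp (2*k*(s-T))) (U*(Real.exp (2*k*(t-T))*(2*k))) t :=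
    hlin.exp.const_mul U
  have hnum := (hasDerivAt_const t P).sub (hexp.const_mul M)
  have hden := (hasDerivAt_const t (1:ℝ)).sub hexp
  have hd := hnum.div hden h
  refine hd.congr_deriv ?_
  simp only [Pi.sub_apply]
  ring

/-- The backward Riccati ODE `a' = c₂⁻¹ a² + 2c₀ a - c₃ - c₄`, `a(T) = c₅`,
with `c₂ > 0`, `c₃ + c₄ ≥ 0`, `c₅ ≥ 0`, admits a solution on all of `[0,T]` satisfying
`a(t) ≥ min{c₅, r₋}` (with `r₋` the smaller root of `c₂⁻¹ r² + 2c₀ r - c₃ - c₄ = 0`) and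
`a(t) ≥ 0` on `[0,T]`. -/
theorem stmt14 (T c₀ c₂ c₃ c₄ c₅ : ℝ) (hT : 0 ≤ T) (hc₂ : 0 < c₂)
    (hcc : 0 ≤ c₃ + c₄) (hc₅ : 0 ≤ c₅) :
    ∃ a : ℝ → ℝ,
      (∀ t ∈ Set.Icc (0:ℝ) T,
        HasDerivWithinAt a (c₂⁻¹ * (a t)^2 + 2*c₀*a t - c₃ - c₄) (Set.Icc (0:ℝ) T) t) ∧
      a T = c₅ ∧
      ∀ t ∈ Set.Icc (0:ℝ) T,
        min c₅ (c₂ * (-c₀ - Real.sqrt (c₀^2 + (c₃ + c₄)/c₂))) ≤ a t ∧ 0 ≤ a t := by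
  have hc₂' : c₂ ≠ 0 := ne_of_gt hc₂
  have hdivnn : 0 ≤ (c₃ + c₄)/c₂ := div_nonneg hcc hc₂.le
  have hDnn : 0 ≤ c₀^2 + (c₃+c₄)/c₂ := add_nonneg (sq_nonneg _) hdivnn
  set k := Real.sqrt (c₀^2 + (c₃+c₄)/c₂) with hkdef
  have hk0 : 0 ≤ k := Real.sqrt_nonneg _
  have hk2 : k^2 = c₀^2 + (c₃+c₄)/c₂ := Real.sq_sqrt hDnn
  have habs : |c₀| ≤ k := by
    rw [hkdef, ← Real.sqrt_sq_eq_abs]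
    exact Real.sqrt_le_sqrt (by linarith)
  have habs1 := neg_abs_le c₀
  have habs2 := le_abs_self c₀
  have hM0 : c₂*(-c₀ - k) ≤ 0 := by nlinarith
  have hP0 : 0 ≤ c₂*(-c₀ + k) := by nlinarith
  have hmin : min c₅ (c₂*(-c₀ - k)) ≤ 0 := le_trans (min_le_right _ _) hM0
  by_cases hroot : c₂⁻¹*c₅^2 + 2*c₀*c₅ - c₃ - c₄ = 0
  · refine ⟨fun _ => c₅, ?_, rfl, ?_⟩
    · intro t ht
      show HasDerivWithinAt _ (c₂⁻¹*c₅^2 + 2*c₀*c₅ - c₃ - c₄) _ t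
      rw [hroot]
      exact hasDerivWithinAt_const t _ c₅
    · intro t ht
      exact ⟨le_trans hmin hc₅, hc₅⟩
  · by_cases hk : k = 0
    · -- degenerate: c₀ = 0, c₃ + c₄ = 0, c₅ > 0
      have h0 : c₀^2 + (c₃+c₄)/c₂ = 0 := by rw [← hk2, hk]; ring
      have hc0 : c₀ = 0 := by nlinarith [sq_nonneg c₀]
      have hc34 : c₃ + c₄ = 0 := by
        have : (c₃+c₄)/c₂ = 0 := by nlinarith [sq_nonneg c₀]
        field_simp at this; linarith
      have hc5pos : 0 < c₅ := by
        rcases hc₅.lt_or_eq with h | h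
        · exact h
        · exfalso; apply hroot; rw [← h]; ring_nf; nlinarith
      refine ⟨fun s => c₂*c₅/(c₂ + c₅*(T - s)), ?_, ?_, ?_⟩
      · intro t ht
        have hdpos : 0 < c₂ + c₅*(T - t) := by nlinarith [ht.2]
        have hg : HasDerivAt (fun s : ℝ => c₂ + c₅*(T - s)) (c₅ * (-1)) t := by
          have h := (hasDerivAt_const t c₂).add (((hasDerivAt_id t).const_sub T).const_mul c₅)
          rw [zero_add] at h
          exact h
        have hd := ((hasDerivAt_const t (c₂*c₅)).div hg (ne_of_gt hdpos)).hasDerivWithinAt (s := Set.Icc (0:ℝ) T)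
        refine HasDerivWithinAt.congr_deriv hd (Eq.symm ?_)
        show c₂⁻¹ * (c₂*c₅/(c₂ + c₅*(T - t)))^2 + 2*c₀*(c₂*c₅/(c₂ + c₅*(T - t))) - c₃ - c₄ = _
        have hc3 : c₃ = -c₄ := by linarith
        rw [hc0, hc3]
        field_simp
        ring
      · show c₂*c₅/(c₂ + c₅*(T - T)) = c₅
        rw [sub_self, mul_zero, add_zero, mul_comm, mul_div_assoc, div_self hc₂', mul_one]
      · intro t ht
        have hdpos : 0 < c₂ + c₅*(T - t) := by nlinarith [ht.2]
        have hnn : (0:ℝ) ≤ c₂*c₅/(c₂ + c₅*(T - t)) :=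
          div_nonneg (by positivity) hdpos.le
        exact ⟨le_trans hmin hnn, hnn⟩
    · -- main case: k > 0
      have hkpos : 0 < k := lt_of_le_of_ne hk0 (Ne.symm hk)
      have hc₅M : 0 < c₅ - c₂*(-c₀ - k) := by
        rcases hM0.lt_or_eq with h | h
        · linarith
        · have hck : -c₀ - k = 0 := by
            rcases mul_eq_zero.mp h with h' | h'
            · exact absurd h' hc₂'
            · exact h'
          have hc34 : c₃ + c₄ = 0 := by
            have hkc : k^2 = c₀^2 := by rw [show k = -c₀ by linarith]; ring
            have h2 : (c₃+c₄)/c₂ = 0 := by linarith [hk2]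
            field_simp at h2; linarith
          have hc5pos : 0 < c₅ := by
            rcases hc₅.lt_or_eq with h5 | h5
            · exact h5
            · exfalso; apply hroot; rw [← h5]; norm_num; linarith
          linarith
      set P := c₂*(-c₀ + k) with hPdef
      set M := c₂*(-c₀ - k) with hMdef
      set U := (c₅ - P)/(c₅ - M) with hUdef
      have hPM : 0 < P - M := by rw [hPdef, hMdef]; nlinarith
      have hU1 : U < 1 := by rw [hUdef, div_lt_one hc₅M]; linarith
      have hMU : M * U ≤ P := by
        rw [hUdef, mul_div_assoc']
        rw [div_le_iff₀ hc₅M]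
        nlinarith
      refine ⟨fun s => (P - M*(U*Real.exp (2*k*(s-T))))/(1 - U*Real.exp (2*k*(s-T))), ?_, ?_, ?_⟩
      · intro t ht
        have he0 : 0 < Real.exp (2*k*(t-T)) := Real.exp_pos _
        have he1 : Real.exp (2*k*(t-T)) ≤ 1 := by
          rw [show (1:ℝ) = Real.exp 0 from Real.exp_zero.symm]
          exact Real.exp_le_exp.mpr (by nlinarith [ht.2])
        have hden : 0 < 1 - U*Real.exp (2*k*(t-T)) := by
          nlinarith [mul_pos he0 (sub_pos.mpr hU1)]
        have hd := (riccati_deriv_aux P M U k T t (ne_of_gt hden)).hasDerivWithinAt (s := Set.Icc (0:ℝ) T)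
        refine HasDerivWithinAt.congr_deriv hd (Eq.symm ?_)
        show c₂⁻¹ * ((P - M*(U*Real.exp (2*k*(t-T))))/(1 - U*Real.exp (2*k*(t-T))))^2
            + 2*c₀*((P - M*(U*Real.exp (2*k*(t-T))))/(1 - U*Real.exp (2*k*(t-T)))) - c₃ - c₄ = _
        have hc3 : c₃ = c₂*k^2 - c₂*c₀^2 - c₄ := by
          have h := hk2
          field_simp at h
          linarith
        rw [hPdef, hMdef, hc3]
        generalize Real.exp (2*k*(t-T)) = e at hden ⊢
        have hne := ne_of_gt hden
        field_simp
        ring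
      · show (P - M*(U*Real.exp (2*k*(T-T))))/(1 - U*Real.exp (2*k*(T-T))) = c₅
        rw [sub_self, mul_zero, Real.exp_zero, mul_one]
        have h1U : 1 - U = (P - M)/(c₅ - M) := by
          rw [hUdef]
          field_simp
          ring
        have hPU : P - M*U = c₅*(P - M)/(c₅ - M) := by
          rw [hUdef]
          field_simp
          ring
        rw [h1U, hPU]
        rw [div_div_div_eq, mul_comm (c₅*(P-M)) (c₅-M), mul_div_mul_left _ _ (ne_of_gt hc₅M)]
        exact mul_div_cancel_right₀ c₅ (ne_of_gt hPM)
      · intro t ht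
        have he0 : 0 < Real.exp (2*k*(t-T)) := Real.exp_pos _
        have he1 : Real.exp (2*k*(t-T)) ≤ 1 := by
          rw [show (1:ℝ) = Real.exp 0 from Real.exp_zero.symm]
          exact Real.exp_le_exp.mpr (by nlinarith [ht.2])
        have hden : 0 < 1 - U*Real.exp (2*k*(t-T)) := by
          nlinarith [mul_pos he0 (sub_pos.mpr hU1)]
        have hnum : 0 ≤ P - M*(U*Real.exp (2*k*(t-T))) := by
          have h2 : M*U*Real.exp (2*k*(t-T)) ≤ P*Real.exp (2*k*(t-T)) :=
            mul_le_mul_of_nonneg_right hMU he0.le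
          have h3 : P*Real.exp (2*k*(t-T)) ≤ P := by nlinarith
          nlinarith [h2, h3]
        have hnn : (0:ℝ) ≤ (P - M*(U*Real.exp (2*k*(t-T))))/(1 - U*Real.exp (2*k*(t-T))) :=
          div_nonneg hnum hden.le
        exact ⟨le_trans hmin hnn, hnn⟩
end
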